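/- Let (p_n)_{n≥1} ⊆ [1,∞) and (σ_n)_{n≥1} ⊆ ℝ with inf_n σ_n < sup_n σ_n. Assume that the series Σ_{n≥1} p_n e^{σ_n x} diverges for every x ∈ ℝ. Then for each W ∈ {E_BE, E_MB, E_FD}, H_W(u,v) = −∞ for every (u,v) in the interior of dom H_W. -/

import Mathlib

open Filter

/-- The Bose–Einstein entropy, with values in `ℝ ∪ {+∞}`. -/
noncomputable def EBEe (u : ℝ) : EReal :=
  if 0 ≤ u then ((u * Real.log u - (1 + u) * Real.log (1 + u) : ℝ) : EReal) else ⊤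

/-- The Maxwell–Boltzmann entropy, with values in `ℝ ∪ {+∞}`. -/
noncomputable def EMBe (u : ℝ) : EReal :=
  if 0 ≤ u then ((u * (Real.log u - 1) : ℝ) : EReal) else ⊤

/-- The Fermi–Dirac entropy, with values in `ℝ ∪ {+∞}`. -/
noncomputable def EFDe (u : ℝ) : EReal :=
  if 0 ≤ u ∧ u ≤ 1 then ((u * Real.log u + (1 - u) * Real.log (1 - u) : ℝ) : EReal) else ⊤

/-- The sum of a series in `ℝ ∪ {±∞}`, following the paper's convention: the limit of the
partial sums when this limit exists in `[−∞,+∞]`, and `+∞` otherwise. -/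
noncomputable def serSum (β : ℕ → EReal) : EReal :=
  @dite _ (∃ l : EReal, Tendsto (fun N => ∑ k ∈ Finset.range N, β k) atTop (nhds l))
    (Classical.dec _) (fun h => h.choose) (fun _ => ⊤)

/-- `S(u,v)`: the set of sequences of nonnegative reals with `Σ u_n = u` and `Σ σ_n u_n = v`
(sums as limits of partial sums). -/
def Sfeas (σ : ℕ → ℝ) (u v : ℝ) : Set (ℕ → ℝ) :=
  {w | (∀ n, 0 ≤ w n) ∧
    Tendsto (fun N => ∑ k ∈ Finset.range N, w k) atTop (nhds u) ∧
    Tendsto (fun N => ∑ k ∈ Finset.range N, σ k * w k) atTop (nhds v)}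

/-- The value (marginal) function `H_W(u,v) = inf { Σ p_n W(u_n/p_n) : (u_n) ∈ S(u,v) }`,
with `inf ∅ = +∞`. -/
noncomputable def Hval (p σ : ℕ → ℝ) (W : ℝ → EReal) (u v : ℝ) : EReal :=
  sInf ((fun w => serSum fun n => (p n : EReal) * W (w n / p n)) '' Sfeas σ u v)

/-!
`H_W` is the infimal projection of a convex functional, hence convex. Suppose it is finite at an
interior point `z` of its domain. Convex combinations of near-optimal sequences at the corners of a
small square around `z` show that `H_W` is bounded above near `z`, so its epigraph has an interior
point above `z`, and separating `(z, H_W z - 1)` from that interior gives an affine minorant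
`α + x u + y v ≤ H_W(u, v)`. Evaluated on finitely supported sequences `u_n = p_n τ_n` with
`τ_n ∝ exp (x + y σ_n) ≤ 1`, and using `W t ≤ t log t` on `[0, 1]`, it bounds the partial sums of
`∑ p_n exp (σ_n y)`, which diverges by assumption.
-/

open Real Set Topology

lemma EReal.coe_finset_sum {ι : Type*} (s : Finset ι) (a : ι → ℝ) :
    ((∑ i ∈ s, a i : ℝ) : EReal) = ∑ i ∈ s, (a i : EReal) :=
  map_sum (⟨⟨((↑) : ℝ → EReal), EReal.coe_zero⟩, EReal.coe_add⟩ : ℝ →+ EReal) a s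

lemma serSum_eq_of_tendsto {β : ℕ → EReal} {l : EReal}
    (h : Tendsto (fun N => ∑ k ∈ Finset.range N, β k) atTop (𝓝 l)) : serSum β = l := by
  have he : ∃ l, Tendsto (fun N => ∑ k ∈ Finset.range N, β k) atTop (𝓝 l) := ⟨l, h⟩
  rw [serSum, dif_pos he]
  exact tendsto_nhds_unique he.choose_spec h

lemma tendsto_serSum_of_ne_top {β : ℕ → EReal} (h : serSum β ≠ ⊤) :
    Tendsto (fun N => ∑ k ∈ Finset.range N, β k) atTop (𝓝 (serSum β)) := by
  by_cases he : ∃ l, Tendsto (fun N => ∑ k ∈ Finset.range N, β k) atTop (𝓝 l)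
  · obtain ⟨l, hl⟩ := he
    rwa [serSum_eq_of_tendsto hl]
  · exact absurd (by rw [serSum, dif_neg he]) h

lemma serSum_eq_top_of_eq_top {β : ℕ → EReal} (hβ : ∀ n, β n ≠ ⊥) {n₀ : ℕ} (h : β n₀ = ⊤) :
    serSum β = ⊤ := by
  refine serSum_eq_of_tendsto (tendsto_const_nhds.congr' ?_)
  filter_upwards [eventually_gt_atTop n₀] with N hN
  have hrest : ∑ k ∈ (Finset.range N).erase n₀, β k ≠ ⊥ :=
    Finset.sum_induction _ (· ≠ ⊥) (fun a b ha hb => EReal.add_ne_bot_iff.2 ⟨ha, hb⟩)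
      EReal.zero_ne_bot fun k _ => hβ k
  rw [← Finset.add_sum_erase _ _ (Finset.mem_range.2 hN), h, EReal.top_add_of_ne_bot hrest]

lemma serSum_coe_le {a : ℕ → ℝ} {r : ℝ} (ha : ∀ᶠ n in atTop, a n ≤ 0)
    (hr : ∀ᶠ N in atTop, ∑ k ∈ Finset.range N, a k ≤ r) :
    serSum (fun n => (a n : EReal)) ≤ r := by
  obtain ⟨K, hK⟩ := eventually_atTop.1 ha
  set S : ℕ → EReal := fun N => ((∑ k ∈ Finset.range N, a k : ℝ) : EReal)
  have hanti : Antitone fun N => S (N + K) := antitone_nat_of_succ_le fun N => by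
    simp only [S, add_right_comm N 1 K, Finset.sum_range_succ, EReal.coe_le_coe_iff]
    linarith [hK (N + K) (Nat.le_add_left _ _)]
  have hS : Tendsto S atTop (𝓝 (⨅ N, S (N + K))) :=
    (tendsto_add_atTop_iff_nat K).1 (tendsto_atTop_iInf hanti)
  have hsum : (fun N => ∑ k ∈ Finset.range N, (a k : EReal)) = S :=
    funext fun N => (EReal.coe_finset_sum _ _).symm
  rw [serSum_eq_of_tendsto (by rwa [hsum])]
  exact le_of_tendsto hS (hr.mono fun N hN => EReal.coe_le_coe_iff.2 hN)

lemma eventually_subset_range (s : Finset ℕ) : ∀ᶠ N in atTop, s ⊆ Finset.range N := by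
  obtain ⟨n, hn⟩ := Finset.exists_nat_subset_range s
  filter_upwards [eventually_ge_atTop n] with N hN
  exact hn.trans (Finset.range_subset_range.2 hN)

section Sfeas

variable {σ : ℕ → ℝ}

lemma tendsto_zero_of_mem_Sfeas {u v : ℝ} {w : ℕ → ℝ} (hw : w ∈ Sfeas σ u v) :
    Tendsto w atTop (𝓝 0) :=
  ((hasSum_iff_tendsto_nat_of_nonneg hw.1 u).2 hw.2.1).summable.tendsto_atTop_zero

lemma add_smul_mem_Sfeas {u₁ v₁ u₂ v₂ a b : ℝ} {w₁ w₂ : ℕ → ℝ} (h₁ : w₁ ∈ Sfeas σ u₁ v₁)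
    (h₂ : w₂ ∈ Sfeas σ u₂ v₂) (ha : 0 ≤ a) (hb : 0 ≤ b) :
    a • w₁ + b • w₂ ∈ Sfeas σ (a * u₁ + b * u₂) (a * v₁ + b * v₂) := by
  refine ⟨fun k => ?_, ?_, ?_⟩
  · have := h₁.1 k
    have := h₂.1 k
    simp only [Pi.add_apply, Pi.smul_apply, smul_eq_mul]
    positivity
  · refine ((h₁.2.1.const_mul a).add (h₂.2.1.const_mul b)).congr fun N => ?_
    simp only [Pi.add_apply, Pi.smul_apply, smul_eq_mul, Finset.mul_sum, Finset.sum_add_distrib]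
  · refine ((h₁.2.2.const_mul a).add (h₂.2.2.const_mul b)).congr fun N => ?_
    simp only [Pi.add_apply, Pi.smul_apply, smul_eq_mul, Finset.mul_sum, ← Finset.sum_add_distrib]
    exact Finset.sum_congr rfl fun k _ => by ring

lemma indicator_mem_Sfeas (s : Finset ℕ) {w : ℕ → ℝ} (hw : ∀ k, 0 ≤ w k) :
    (s : Set ℕ).indicator w ∈ Sfeas σ (∑ k ∈ s, w k) (∑ k ∈ s, σ k * w k) := by
  refine ⟨fun k => indicator_nonneg (fun k _ => hw k) k, ?_, ?_⟩ <;>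
  · refine tendsto_const_nhds.congr' ?_
    filter_upwards [eventually_subset_range s] with N hN
    simp only [← indicator_mul_right, Finset.sum_indicator_subset _ hN]

end Sfeas

structure IsAdmissibleEntropy (W : ℝ → EReal) (f : ℝ → ℝ) (D : Set ℝ) : Prop where
  apply_of_mem : ∀ t ∈ D, W t = f t
  apply_of_notMem : ∀ t ∉ D, W t = ⊤
  convexOn : ConvexOn ℝ D f
  Icc_subset : Icc 0 1 ⊆ D
  le_mul_log : ∀ t ∈ Icc (0 : ℝ) 1, f t ≤ t * log t

namespace IsAdmissibleEntropy

variable {W : ℝ → EReal} {f : ℝ → ℝ} {D : Set ℝ}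

lemma coe_mul_apply (hW : IsAdmissibleEntropy W f D) (a : ℝ) {t : ℝ} (ht : t ∈ D) :
    (a : EReal) * W t = ((a * f t : ℝ) : EReal) := by
  rw [hW.apply_of_mem t ht, EReal.coe_mul]

lemma coe_mul_ne_bot (hW : IsAdmissibleEntropy W f D) {a : ℝ} (ha : 0 < a) (t : ℝ) :
    (a : EReal) * W t ≠ ⊥ := by
  by_cases ht : t ∈ D
  · rw [hW.coe_mul_apply a ht]
    exact EReal.coe_ne_bot _
  · rw [hW.apply_of_notMem t ht, EReal.mul_top_of_pos (EReal.coe_pos.2 ha)]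
    exact top_ne_bot

end IsAdmissibleEntropy

/-- A relaxed epigraph of `Hval p σ W`: the partial sums of the entropy series need only be
eventually bounded by the height. Convexity then holds termwise, and the height still bounds
`Hval` because the terms are eventually nonpositive. -/
def entropyEpigraph (p σ : ℕ → ℝ) (f : ℝ → ℝ) (D : Set ℝ) : Set ((ℝ × ℝ) × ℝ) :=
  {q | ∃ w ∈ Sfeas σ q.1.1 q.1.2, (∀ n, w n / p n ∈ D) ∧
    ∀ᶠ N in atTop, ∑ k ∈ Finset.range N, p k * f (w k / p k) ≤ q.2}

section entropyEpigraph

variable {p σ : ℕ → ℝ} {W : ℝ → EReal} {f : ℝ → ℝ} {D : Set ℝ}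

lemma mem_entropyEpigraph_of_le {q : (ℝ × ℝ) × ℝ} (hq : q ∈ entropyEpigraph p σ f D) {r : ℝ}
    (hr : q.2 ≤ r) : (q.1, r) ∈ entropyEpigraph p σ f D := by
  obtain ⟨w, hw, hD, hS⟩ := hq
  exact ⟨w, hw, hD, hS.mono fun N hN => hN.trans hr⟩

lemma convex_entropyEpigraph (hp : ∀ n, 0 < p n) (hf : ConvexOn ℝ D f) :
    Convex ℝ (entropyEpigraph p σ f D) := by
  rintro q₁ ⟨w₁, hw₁, hD₁, hS₁⟩ q₂ ⟨w₂, hw₂, hD₂, hS₂⟩ a b ha hb hab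
  have harg : ∀ n, (a • w₁ + b • w₂) n / p n = a • (w₁ n / p n) + b • (w₂ n / p n) := fun n => by
    simp only [Pi.add_apply, Pi.smul_apply, smul_eq_mul]
    ring
  have hterm : ∀ k, p k * f ((a • w₁ + b • w₂) k / p k) ≤
      a * (p k * f (w₁ k / p k)) + b * (p k * f (w₂ k / p k)) := fun k => by
    have := mul_le_mul_of_nonneg_left (hf.2 (hD₁ k) (hD₂ k) ha hb hab) (hp k).le
    rw [harg]
    simp only [smul_eq_mul] at this ⊢
    exact this.trans_eq (by ring)
  refine ⟨a • w₁ + b • w₂, by simpa using add_smul_mem_Sfeas hw₁ hw₂ ha hb,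
    fun n => harg n ▸ hf.1 (hD₁ n) (hD₂ n) ha hb hab, ?_⟩
  filter_upwards [hS₁, hS₂] with N h₁ h₂
  calc ∑ k ∈ Finset.range N, p k * f ((a • w₁ + b • w₂) k / p k)
      ≤ a * ∑ k ∈ Finset.range N, p k * f (w₁ k / p k) +
          b * ∑ k ∈ Finset.range N, p k * f (w₂ k / p k) := by
        rw [Finset.mul_sum, Finset.mul_sum, ← Finset.sum_add_distrib]
        exact Finset.sum_le_sum fun k _ => hterm k
    _ ≤ a * q₁.2 + b * q₂.2 := by gcongr
    _ = (a • q₁ + b • q₂).2 := by simp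

lemma mem_entropyEpigraph_of_Hval_lt (hW : IsAdmissibleEntropy W f D) (hp : ∀ n, 0 < p n)
    {e : ℝ × ℝ} {r : ℝ} (h : Hval p σ W e.1 e.2 < r) : (e, r) ∈ entropyEpigraph p σ f D := by
  obtain ⟨_, ⟨w, hw, rfl⟩, hlt⟩ := sInf_lt_iff.1 h
  dsimp only at hlt
  have hD : ∀ n, w n / p n ∈ D := fun n => by
    by_contra hn
    have htop := serSum_eq_top_of_eq_top (fun k => hW.coe_mul_ne_bot (hp k) (w k / p k))
      (n₀ := n) (by rw [hW.apply_of_notMem _ hn, EReal.mul_top_of_pos (EReal.coe_pos.2 (hp n))])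
    exact (htop ▸ hlt).not_ge le_top
  refine ⟨w, hw, hD, ?_⟩
  have hlim := tendsto_serSum_of_ne_top (hlt.trans (EReal.coe_lt_top r)).ne
  filter_upwards [hlim.eventually (gt_mem_nhds hlt)] with N hN
  simp only [hW.coe_mul_apply _ (hD _), ← EReal.coe_finset_sum] at hN
  exact (EReal.coe_lt_coe_iff.1 hN).le

lemma Hval_le_of_mem_entropyEpigraph (hW : IsAdmissibleEntropy W f D) (hp : ∀ n, 1 ≤ p n)
    {q : (ℝ × ℝ) × ℝ} (hq : q ∈ entropyEpigraph p σ f D) : Hval p σ W q.1.1 q.1.2 ≤ q.2 := by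
  obtain ⟨w, hw, hD, hS⟩ := hq
  refine (sInf_le (mem_image_of_mem _ hw)).trans ?_
  simp only [hW.coe_mul_apply _ (hD _)]
  refine serSum_coe_le ?_ hS
  filter_upwards [(tendsto_zero_of_mem_Sfeas hw).eventually (eventually_le_nhds one_pos)] with n hn
  have h₀ : 0 ≤ w n / p n := div_nonneg (hw.1 n) (zero_le_one.trans (hp n))
  have h₁ : w n / p n ≤ 1 := (div_le_self (hw.1 n) (hp n)).trans hn
  exact mul_nonpos_of_nonneg_of_nonpos (zero_le_one.trans (hp n))
    ((hW.le_mul_log _ ⟨h₀, h₁⟩).trans (mul_log_nonpos h₀ h₁))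

lemma sum_mem_entropyEpigraph (hW : IsAdmissibleEntropy W f D) (hp : ∀ n, 0 < p n)
    (s : Finset ℕ) {τ : ℕ → ℝ} (hτ : ∀ k, τ k ∈ Icc 0 1) :
    ((∑ k ∈ s, p k * τ k, ∑ k ∈ s, σ k * (p k * τ k)), ∑ k ∈ s, p k * f (τ k)) ∈
      entropyEpigraph p σ f D := by
  have harg : ∀ k, (s : Set ℕ).indicator (fun k => p k * τ k) k / p k =
      (s : Set ℕ).indicator τ k := fun k => by
    by_cases hk : k ∈ s <;> simp [hk, (hp k).ne']
  have hf0 : f 0 ≤ 0 := by simpa using hW.le_mul_log 0 ⟨le_rfl, zero_le_one⟩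
  refine ⟨_, indicator_mem_Sfeas s fun k => mul_nonneg (hp k).le (hτ k).1, fun k => ?_, ?_⟩
  · rw [harg]
    by_cases hk : k ∈ s
    · simpa [hk] using hW.Icc_subset (hτ k)
    · simpa [hk] using hW.Icc_subset ⟨le_rfl, zero_le_one⟩
  · filter_upwards [eventually_subset_range s] with N hN
    simp only [harg]
    rw [← Finset.sum_sdiff hN]
    have hout : ∑ k ∈ Finset.range N \ s, p k * f ((s : Set ℕ).indicator τ k) ≤ 0 :=
      Finset.sum_nonpos fun k hk => by
        rw [indicator_of_notMem (by simpa using (Finset.mem_sdiff.1 hk).2)]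
        exact mul_nonpos_of_nonneg_of_nonpos (hp k).le hf0
    have hin : ∑ k ∈ s, p k * f ((s : Set ℕ).indicator τ k) = ∑ k ∈ s, p k * f (τ k) :=
      Finset.sum_congr rfl fun k hk => by rw [indicator_of_mem (by simpa using hk)]
    simp only [hin]
    linarith

end entropyEpigraph

lemma convexHull_corners_eq_closedBall (z : ℝ × ℝ) {δ : ℝ} (hδ : 0 ≤ δ) :
    convexHull ℝ ({z.1 - δ, z.1 + δ} ×ˢ {z.2 - δ, z.2 + δ}) = Metric.closedBall z δ := by
  rw [convexHull_prod, convexHull_pair, convexHull_pair, segment_eq_Icc (by linarith),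
    segment_eq_Icc (by linarith), ← Real.closedBall_eq_Icc, ← Real.closedBall_eq_Icc,
    closedBall_prod_same]

/-- `A` contains a slab over the convex hull of the corners of a small square around `z`. -/
lemma exists_mem_interior_of_mem_interior_image_fst {A : Set ((ℝ × ℝ) × ℝ)} (hA : Convex ℝ A)
    (hup : ∀ q ∈ A, ∀ r, q.2 ≤ r → (q.1, r) ∈ A) {z : ℝ × ℝ}
    (hz : z ∈ interior (Prod.fst '' A)) : ∃ c, (z, c) ∈ interior A := by
  obtain ⟨δ, hδ, hball⟩ :=
    Metric.nhds_basis_closedBall.mem_iff.1 (mem_interior_iff_mem_nhds.1 hz)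
  set S : Set (ℝ × ℝ) := {z.1 - δ, z.1 + δ} ×ˢ {z.2 - δ, z.2 + δ}
  have hS : S ⊆ Prod.fst '' A :=
    (subset_convexHull ℝ S).trans ((convexHull_corners_eq_closedBall z hδ.le).le.trans hball)
  have hcorners : ∀ᶠ r in atTop, ∀ e ∈ S, (e, r) ∈ A := by
    rw [eventually_all_finite (toFinite S)]
    rintro e he
    obtain ⟨q, hq, rfl⟩ := hS he
    filter_upwards [eventually_ge_atTop q.2] with r hr using hup q hq r hr
  obtain ⟨C, hC⟩ := hcorners.exists
  have hslab : Metric.closedBall z δ ×ˢ {C} ⊆ A := by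
    rw [← convexHull_corners_eq_closedBall z hδ.le, ← convexHull_singleton (𝕜 := ℝ) C,
      ← convexHull_prod]
    exact convexHull_min (by rintro ⟨e, r⟩ ⟨he, rfl⟩; exact hC e he) hA
  refine ⟨C + 1, interior_maximal ?_ (Metric.isOpen_ball.prod isOpen_Ioi)
    ⟨Metric.mem_ball_self hδ, lt_add_one C⟩⟩
  rintro ⟨e, r⟩ ⟨he, hr⟩
  exact hup (e, C) (hslab ⟨Metric.ball_subset_closedBall he, rfl⟩) r (le_of_lt hr)

/-- A functional separating `(z, h)` from the interior of `A` has a negative `ℝ`-component,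
because it also separates `(z, h)` from `(z, c)`. -/
lemma exists_affine_le_of_mem_interior {E : Type*} [NormedAddCommGroup E] [NormedSpace ℝ E]
    {A : Set (E × ℝ)} (hA : Convex ℝ A) {z : E} {c h : ℝ} (hc : (z, c) ∈ interior A)
    (hh : (z, h) ∉ A) (hhc : h < c) : ∃ (α : ℝ) (ℓ : E →L[ℝ] ℝ), ∀ q ∈ A, α + ℓ q.1 ≤ q.2 := by
  obtain ⟨φ, hφ⟩ := geometric_hahn_banach_open_point hA.interior isOpen_interior
    fun hmem => hh (interior_subset hmem)
  have hφA : ∀ q ∈ A, φ q ≤ φ (z, h) := by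
    have hcl : A ⊆ closure (interior A) := by
      rw [hA.closure_interior_eq_closure_of_nonempty_interior ⟨_, hc⟩]
      exact subset_closure
    exact fun q hq => closure_minimal (fun q' hq' => (hφ q' hq').le)
      (isClosed_le φ.continuous continuous_const) (hcl hq)
  set k := φ (0, 1)
  have hsplit : ∀ q : E × ℝ, φ q = φ (q.1, 0) + q.2 * k := fun q => by
    rw [← smul_eq_mul, ← map_smul, ← map_add]
    simp
  have hk : k < 0 := by
    have := hφ _ hc
    rw [hsplit (z, c), hsplit (z, h)] at this
    nlinarith
  refine ⟨h + φ (z, 0) / k, -k⁻¹ • φ.comp (ContinuousLinearMap.inl ℝ E ℝ), fun q hq => ?_⟩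
  have := hφA q hq
  rw [hsplit q, hsplit (z, h)] at this
  have hdiv : (φ (z, 0) - φ (q.1, 0)) / k ≤ q.2 - h := (div_le_iff_of_neg hk).2 (by linarith)
  simp only [FunLike.coe_smul, Pi.smul_apply, ContinuousLinearMap.comp_apply,
    ContinuousLinearMap.inl_apply, smul_eq_mul]
  rw [sub_div] at hdiv
  rw [neg_mul, ← div_eq_inv_mul]
  linarith

/-- Test the hypothesis on `τ = exp (θ - c)` with `c = |α| + 1`, for which
`p τ θ - p τ log τ = c exp (-c) * p exp θ`; the case `s = {n}`, `τ = 1` gives `θ n ≤ |α|`. -/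
lemma summable_mul_exp_of_le_sum_mul_log {p θ : ℕ → ℝ} (hp : ∀ n, 1 ≤ p n) {α : ℝ}
    (h : ∀ (s : Finset ℕ) (τ : ℕ → ℝ), (∀ k, τ k ∈ Icc 0 1) →
      α + ∑ k ∈ s, p k * τ k * θ k ≤ ∑ k ∈ s, p k * (τ k * log (τ k))) :
    Summable fun n => p n * exp (θ n) := by
  set c := |α| + 1
  have hθ : ∀ n, θ n ≤ |α| := fun n => by
    have := h {n} (fun _ => 1) fun _ => ⟨zero_le_one, le_rfl⟩
    simp only [Finset.sum_singleton, mul_one, log_one, mul_zero] at this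
    by_contra! hlt
    nlinarith [mul_le_mul_of_nonneg_right (hp n) ((abs_nonneg α).trans hlt.le), neg_le_abs α]
  have hc : 0 < c * exp (-c) := by positivity
  refine summable_of_sum_range_le (c := -α / (c * exp (-c)))
    (fun n => mul_nonneg (zero_le_one.trans (hp n)) (exp_pos _).le) fun m => ?_
  have := h (Finset.range m) (fun k => exp (θ k - c))
    fun k => ⟨(exp_pos _).le, exp_le_one_iff.2 (by linarith [hθ k])⟩
  have hterm : ∀ k, p k * exp (θ k - c) * θ k - p k * (exp (θ k - c) * log (exp (θ k - c))) =
      p k * exp (θ k) * (c * exp (-c)) := fun k => by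
    rw [log_exp, sub_eq_add_neg (θ k), exp_add]
    ring
  rw [le_div_iff₀ hc, Finset.sum_mul, ← Finset.sum_congr rfl fun k _ => hterm k,
    Finset.sum_sub_distrib]
  linarith

lemma convexOn_maxwellBoltzmann : ConvexOn ℝ (Ici 0) fun t : ℝ => t * (log t - 1) :=
  (convexOn_mul_log.sub (concaveOn_id (convex_Ici 0))).congr fun t _ => by
    show t * log t - t = _
    ring

lemma convexOn_boseEinstein :
    ConvexOn ℝ (Ici 0) fun t : ℝ => t * log t - (1 + t) * log (1 + t) := by
  have hderiv : ∀ x ∈ interior (Ici (0 : ℝ)),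
      HasDerivAt (fun t => t * log t - (1 + t) * log (1 + t)) (log x - log (1 + x)) x := by
    intro x hx
    rw [interior_Ici, mem_Ioi] at hx
    have h₁ : HasDerivAt (fun t => (1 + t) * log (1 + t)) ((log (1 + x) + 1) * 1) x :=
      (hasDerivAt_mul_log (by positivity : 1 + x ≠ 0)).comp x ((hasDerivAt_id' x).const_add 1)
    exact ((hasDerivAt_mul_log hx.ne').sub h₁).congr_deriv (by ring)
  refine MonotoneOn.convexOn_of_deriv (convex_Ici 0)
    (continuous_mul_log.sub (continuous_mul_log.comp' (continuous_const_add 1))).continuousOn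
    (fun x hx => (hderiv x hx).differentiableAt.differentiableWithinAt) ?_
  intro a ha b hb hab
  rw [(hderiv a ha).deriv, (hderiv b hb).deriv]
  rw [interior_Ici, mem_Ioi] at ha hb
  rw [sub_le_sub_iff, ← log_mul ha.ne' (by positivity), ← log_mul hb.ne' (by positivity)]
  exact log_le_log (by positivity) (by nlinarith)

lemma convexOn_fermiDirac :
    ConvexOn ℝ (Icc 0 1) fun t : ℝ => t * log t + (1 - t) * log (1 - t) :=
  strictConcave_binEntropy.concaveOn.neg.congr fun t _ => by
    simp only [Pi.neg_apply, binEntropy, log_inv]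
    ring

lemma isAdmissibleEntropy_EBEe :
    IsAdmissibleEntropy EBEe (fun t => t * log t - (1 + t) * log (1 + t)) (Ici 0) where
  apply_of_mem _ ht := if_pos ht
  apply_of_notMem _ ht := if_neg ht
  convexOn := convexOn_boseEinstein
  Icc_subset := Icc_subset_Ici_self
  le_mul_log t ht := by
    have h₁ : (1 : ℝ) ≤ 1 + t := by linarith [ht.1]
    nlinarith [log_nonneg h₁]

lemma isAdmissibleEntropy_EMBe :
    IsAdmissibleEntropy EMBe (fun t => t * (log t - 1)) (Ici 0) where
  apply_of_mem _ ht := if_pos ht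
  apply_of_notMem _ ht := if_neg ht
  convexOn := convexOn_maxwellBoltzmann
  Icc_subset := Icc_subset_Ici_self
  le_mul_log t ht := by
    rw [mul_sub, mul_one]
    linarith [ht.1]

lemma isAdmissibleEntropy_EFDe :
    IsAdmissibleEntropy EFDe (fun t => t * log t + (1 - t) * log (1 - t)) (Icc 0 1) where
  apply_of_mem _ ht := if_pos ht
  apply_of_notMem _ ht := if_neg ht
  convexOn := convexOn_fermiDirac
  Icc_subset := subset_rfl
  le_mul_log t ht := by
    have := mul_log_nonpos (by linarith [ht.2] : (0 : ℝ) ≤ 1 - t) (by linarith [ht.1])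
    linarith

lemma summable_of_affine_le_entropyEpigraph {p σ : ℕ → ℝ} {W : ℝ → EReal} {f : ℝ → ℝ}
    {D : Set ℝ} (hW : IsAdmissibleEntropy W f D) (hp : ∀ n, 1 ≤ p n) {α : ℝ}
    {ℓ : ℝ × ℝ →L[ℝ] ℝ} (hℓ : ∀ q ∈ entropyEpigraph p σ f D, α + ℓ q.1 ≤ q.2) :
    Summable fun n => p n * exp (σ n * ℓ (0, 1)) := by
  have hp₀ : ∀ n, 0 < p n := fun n => zero_lt_one.trans_le (hp n)
  have hℓ₂ : ∀ u v, ℓ (u, v) = u * ℓ (1, 0) + v * ℓ (0, 1) := fun u v => by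
    rw [← smul_eq_mul, ← smul_eq_mul, ← map_smul, ← map_smul, ← map_add]
    simp
  have hθ : ∀ k, ℓ (1, σ k) = ℓ (1, 0) + σ k * ℓ (0, 1) := fun k => by rw [hℓ₂, one_mul]
  have hsum := summable_mul_exp_of_le_sum_mul_log hp (θ := fun k => ℓ (1, σ k)) (α := α)
    fun s τ hτ => calc
      α + ∑ k ∈ s, p k * τ k * ℓ (1, σ k)
          = α + ℓ (∑ k ∈ s, p k * τ k, ∑ k ∈ s, σ k * (p k * τ k)) := by
            simp only [hθ, hℓ₂ (Finset.sum _ _), Finset.sum_mul, ← Finset.sum_add_distrib]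
            exact congrArg _ (Finset.sum_congr rfl fun k _ => by ring)
        _ ≤ ∑ k ∈ s, p k * f (τ k) := hℓ _ (sum_mem_entropyEpigraph hW hp₀ s hτ)
        _ ≤ ∑ k ∈ s, p k * (τ k * log (τ k)) := Finset.sum_le_sum fun k _ =>
            mul_le_mul_of_nonneg_left (hW.le_mul_log _ (hτ k)) (hp₀ k).le
  refine (hsum.mul_left (exp (-ℓ (1, 0)))).congr fun n => ?_
  rw [hθ, exp_add, exp_neg]
  field_simp

theorem Hval_eq_bot_of_mem_interior {p σ : ℕ → ℝ} {W : ℝ → EReal} {f : ℝ → ℝ} {D : Set ℝ}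
    (hW : IsAdmissibleEntropy W f D) (hp : ∀ n, 1 ≤ p n)
    (hdiv : ∀ x : ℝ, ¬ Summable fun n => p n * exp (σ n * x)) {z : ℝ × ℝ}
    (hz : z ∈ interior {z : ℝ × ℝ | Hval p σ W z.1 z.2 < ⊤}) : Hval p σ W z.1 z.2 = ⊥ := by
  have hp₀ : ∀ n, 0 < p n := fun n => zero_lt_one.trans_le (hp n)
  set A := entropyEpigraph p σ f D
  have hA : Convex ℝ A := convex_entropyEpigraph hp₀ hW.convexOn
  have hup : ∀ q ∈ A, ∀ r, q.2 ≤ r → (q.1, r) ∈ A := fun q hq r hr =>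
    mem_entropyEpigraph_of_le hq hr
  have hdom : {z : ℝ × ℝ | Hval p σ W z.1 z.2 < ⊤} ⊆ Prod.fst '' A := fun e he => by
    obtain ⟨r, hr, -⟩ := EReal.lt_iff_exists_real_btwn.1 he
    exact ⟨(e, r), mem_entropyEpigraph_of_Hval_lt hW hp₀ hr, rfl⟩
  obtain ⟨c, hc⟩ := exists_mem_interior_of_mem_interior_image_fst hA hup (interior_mono hdom hz)
  by_contra hbot
  set h := (Hval p σ W z.1 z.2).toReal - 1
  have hout : (z, h) ∉ A := fun hzA => by
    have := Hval_le_of_mem_entropyEpigraph hW hp hzA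
    have hfin : Hval p σ W z.1 z.2 < ⊤ := interior_subset (s := {z : ℝ × ℝ | _ < ⊤}) hz
    rw [← EReal.coe_toReal hfin.ne hbot, EReal.coe_le_coe_iff] at this
    linarith
  obtain ⟨α, ℓ, hℓ⟩ := exists_affine_le_of_mem_interior hA hc hout
    (lt_of_not_ge fun hch => hout (hup _ (interior_subset hc) h hch))
  exact hdiv _ (summable_of_affine_le_entropyEpigraph hW hp hℓ)

theorem stmt10_general (p σ : ℕ → ℝ) (hp : ∀ n, 1 ≤ p n)
    (hdiv : ∀ x : ℝ, ¬ Summable fun n => p n * Real.exp (σ n * x)) :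
    ∀ W ∈ ({EBEe, EMBe, EFDe} : Set (ℝ → EReal)),
      ∀ z ∈ interior {z : ℝ × ℝ | Hval p σ W z.1 z.2 < ⊤},
        Hval p σ W z.1 z.2 = ⊥ := by
  rintro W (rfl | rfl | rfl) z hz
  exacts [Hval_eq_bot_of_mem_interior isAdmissibleEntropy_EBEe hp hdiv hz,
    Hval_eq_bot_of_mem_interior isAdmissibleEntropy_EMBe hp hdiv hz,
    Hval_eq_bot_of_mem_interior isAdmissibleEntropy_EFDe hp hdiv hz]

/-- If `inf σ_n < sup σ_n` and the series `Σ p_n e^{σ_n x}` diverges for every real `x`, then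
`H_W = −∞` on the interior of its domain, for each of the three entropies. -/
theorem stmt10 (p σ : ℕ → ℝ) (hp : ∀ n, 1 ≤ p n)
    (hlt : (⨅ n, ((σ n : ℝ) : EReal)) < ⨆ n, ((σ n : ℝ) : EReal))
    (hdiv : ∀ x : ℝ, ¬ Summable fun n => p n * Real.exp (σ n * x)) :
    ∀ W ∈ ({EBEe, EMBe, EFDe} : Set (ℝ → EReal)),
      ∀ z ∈ interior {z : ℝ × ℝ | Hval p σ W z.1 z.2 < ⊤},
        Hval p σ W z.1 z.2 = ⊥ :=
  stmt10_general p σ hp hdiv
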